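/- For integers 1 ≤ r ≤ n/2, the sum n·Σ_{i=1}^{r-1} 1/(n−i) + r·Σ_{i=r}^{n-r} 1/(n−i) is at most (r−1)²/(n−r+1) + r·(1 + ln(n/r − 1)), and for r = n/2 this upper bound is strictly less than n. -/

import Mathlib

/-!
Each term of the first sum satisfies `n / (n - i) = 1 + i / (n - i) ≤ 1 + (r - 1) / (n - r + 1)`.
Under `i ↦ n - i` the second sum becomes the harmonic block `∑_{j=r}^{n-r} 1/j`, which is at most
`1/r + ∫_r^{n-r} dx/x = 1/r + log (n/r - 1)` because `1/x` is antitone. For `n = 2r` the logarithm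
vanishes and the bound reads `(r - 1)² / (r + 1) + r < 2r`.
-/

open Finset Real

theorem sum_Ioc_inv_le_log {a b : ℕ} (ha : 0 < a) (hab : a ≤ b) :
    ∑ i ∈ Ioc a b, (i : ℝ)⁻¹ ≤ log (b / a) := by
  have hanti : AntitoneOn (fun x : ℝ => x⁻¹) (Set.Icc a b) := fun x hx y _ hxy =>
    inv_anti₀ (lt_of_lt_of_le (by exact_mod_cast ha) hx.1) hxy
  have hzero : (0 : ℝ) ∉ Set.uIcc (a : ℝ) b := by
    rw [Set.uIcc_of_le (by exact_mod_cast hab)]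
    exact fun h => (Nat.cast_pos.mpr ha).not_ge h.1
  calc ∑ i ∈ Ioc a b, (i : ℝ)⁻¹
      = ∑ i ∈ Ico a b, ((i + 1 : ℕ) : ℝ)⁻¹ := by
        rw [← Ico_add_one_add_one_eq_Ioc, ← sum_Ico_add' (fun i : ℕ => (i : ℝ)⁻¹)]
    _ ≤ ∫ x in (a : ℝ)..b, x⁻¹ := hanti.sum_le_integral_Ico hab
    _ = log (b / a) := integral_inv hzero

theorem sum_Icc_inv_le_inv_add_log {a b : ℕ} (ha : 0 < a) (hab : a ≤ b) :
    ∑ i ∈ Icc a b, (i : ℝ)⁻¹ ≤ (a : ℝ)⁻¹ + log (b / a) := by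
  rw [Icc_eq_cons_Ioc hab, sum_cons]
  gcongr
  exact sum_Ioc_inv_le_log ha hab

theorem sum_Icc_reflect {M : Type*} [AddCommMonoid M] (f : ℕ → M) (a b : ℕ) :
    ∑ i ∈ Icc a b, f (a + b - i) = ∑ i ∈ Icc a b, f i := by
  refine sum_nbij' (fun i => a + b - i) (fun i => a + b - i) ?_ ?_ ?_ ?_ (fun _ _ => rfl) <;>
    intro i hi <;> simp only [mem_Icc] at hi ⊢ <;> omega

theorem sum_Icc_one_div_sub_le {n r : ℕ} (hr : 1 ≤ r) (hrn : 2 * r ≤ n) :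
    ∑ i ∈ Icc r (n - r), 1 / ((n : ℝ) - i) ≤ (r : ℝ)⁻¹ + log (((n - r : ℕ) : ℝ) / r) :=
  calc ∑ i ∈ Icc r (n - r), 1 / ((n : ℝ) - i)
      = ∑ i ∈ Icc r (n - r), ((r + (n - r) - i : ℕ) : ℝ)⁻¹ := by
        refine sum_congr rfl fun i hi => ?_
        rw [mem_Icc] at hi
        rw [Nat.add_sub_cancel' (by omega), Nat.cast_sub (by omega), one_div]
    _ = ∑ i ∈ Icc r (n - r), (i : ℝ)⁻¹ := sum_Icc_reflect (fun i : ℕ => (i : ℝ)⁻¹) r (n - r)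
    _ ≤ (r : ℝ)⁻¹ + log (((n - r : ℕ) : ℝ) / r) := sum_Icc_inv_le_inv_add_log hr (by omega)

theorem mul_sum_Icc_one_div_sub_le {n m : ℕ} (hmn : m < n) :
    (n : ℝ) * ∑ i ∈ Icc 1 m, 1 / ((n : ℝ) - i) ≤ m + (m : ℝ) ^ 2 / (n - m) := by
  have hgap : (0 : ℝ) < n - m := sub_pos.mpr (by exact_mod_cast hmn)
  have hterm : ∀ i ∈ Icc 1 m, (n : ℝ) * (1 / ((n : ℝ) - i)) ≤ 1 + m / (n - m) := by
    intro i hi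
    have him : (i : ℝ) ≤ m := by exact_mod_cast (mem_Icc.mp hi).2
    have hi0 : (0 : ℝ) ≤ i := Nat.cast_nonneg i
    have hpos : (0 : ℝ) < n - i := by linarith
    calc (n : ℝ) * (1 / ((n : ℝ) - i)) = 1 + i / (n - i) := by field_simp; ring
      _ ≤ 1 + m / (n - m) := by gcongr
  calc (n : ℝ) * ∑ i ∈ Icc 1 m, 1 / ((n : ℝ) - i)
      ≤ ∑ _i ∈ Icc 1 m, (1 + (m : ℝ) / (n - m)) := by rw [mul_sum]; exact sum_le_sum hterm
    _ = m + (m : ℝ) ^ 2 / (n - m) := by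
        rw [sum_const, Nat.card_Icc, Nat.add_sub_cancel, nsmul_eq_mul]
        field_simp

theorem sub_one_sq_div_add_one_lt {r : ℝ} (hr : 1 / 3 < r) : (r - 1) ^ 2 / (r + 1) < r := by
  rw [div_lt_iff₀ (by linarith)]
  nlinarith

/-- For integers `1 ≤ r ≤ n/2`:
`n·Σ_{i=1}^{r-1} 1/(n−i) + r·Σ_{i=r}^{n-r} 1/(n−i)
  ≤ (r−1)²/(n−r+1) + r(1 + ln(n/r − 1))`,
and for `r = n/2` this upper bound is strictly less than `n`. -/
theorem stmt14 (n r : ℕ) (h1 : 1 ≤ r) (h2 : 2 * r ≤ n) :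
    ((n : ℝ) * ∑ i ∈ Finset.Icc 1 (r - 1), 1 / ((n : ℝ) - i)
        + r * ∑ i ∈ Finset.Icc r (n - r), 1 / ((n : ℝ) - i)
      ≤ ((r : ℝ) - 1) ^ 2 / ((n : ℝ) - r + 1)
        + r * (1 + Real.log ((n : ℝ) / r - 1)))
    ∧ (2 * r = n →
        ((r : ℝ) - 1) ^ 2 / ((n : ℝ) - r + 1)
            + r * (1 + Real.log ((n : ℝ) / r - 1)) < n) := by
  have hr1 : (1 : ℝ) ≤ r := by exact_mod_cast h1
  have hr : (0 : ℝ) < r := by linarith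
  refine ⟨?_, fun hn => ?_⟩
  · have hlog : Real.log (((n - r : ℕ) : ℝ) / r) = Real.log ((n : ℝ) / r - 1) := by
      rw [Nat.cast_sub (by omega), sub_div, div_self hr.ne']
    have hfirst := mul_sum_Icc_one_div_sub_le (n := n) (m := r - 1) (by omega)
    rw [Nat.cast_pred h1, sub_sub_eq_add_sub, add_sub_right_comm] at hfirst
    have hsecond := mul_le_mul_of_nonneg_left (sum_Icc_one_div_sub_le (n := n) h1 h2) hr.le
    rw [mul_add, mul_inv_cancel₀ hr.ne', hlog] at hsecond
    linarith
  · have hsq := sub_one_sq_div_add_one_lt (r := r) (by linarith)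
    rw [← hn, Nat.cast_mul, Nat.cast_two, mul_div_cancel_right₀ _ hr.ne',
      show (2 : ℝ) * r - r + 1 = r + 1 by ring]
    norm_num
    linarith
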